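/- arXiv:2412.08501 — 2 statements merged into one kernel-verified Lean document; each statement's English description precedes it below -/
import Mathlib

section
/- Suppose for both classes j ∈ {i, o} the gradient update decreases the class loss: η(‖∇_j‖² + cos θ · ∇_i∇_o) − (η²L/2)(∇_i² + 2cos θ ∇_i∇_o + ∇_o²) > 0, where ∇_j denotes the gradient norms. Then necessarily ηL < 2(min(∇_i², ∇_o²) + cos θ ∇_i∇_o) / (∇_i² + 2cos θ ∇_i∇_o + ∇_o²) and cos θ > −min(∇_i, ∇_o)/max(∇_i, ∇_o). -/
/-- If for both classes `j ∈ {i, o}` the gradient update decreases the class loss,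
i.e. `η(∇ⱼ² + cosθ ∇ᵢ∇ₒ) − (η²L/2)(∇ᵢ² + 2cosθ ∇ᵢ∇ₒ + ∇ₒ²) > 0`, then necessarily
`ηL < 2(min(∇ᵢ², ∇ₒ²) + cosθ ∇ᵢ∇ₒ)/(∇ᵢ² + 2cosθ ∇ᵢ∇ₒ + ∇ₒ²)` and
`cosθ > −min(∇ᵢ, ∇ₒ)/max(∇ᵢ, ∇ₒ)`. -/
theorem lr_and_angle_conditions (gi go c η L : ℝ)
    (hgi : 0 < gi) (hgo : 0 < go) (hc1 : -1 ≤ c) (hc2 : c ≤ 1)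
    (hη : 0 < η) (hL : 0 < L)
    (hdenom : 0 < gi ^ 2 + 2 * c * gi * go + go ^ 2)
    (hi : η * (gi ^ 2 + c * gi * go) -
        η ^ 2 * L / 2 * (gi ^ 2 + 2 * c * gi * go + go ^ 2) > 0)
    (ho : η * (go ^ 2 + c * gi * go) -
        η ^ 2 * L / 2 * (gi ^ 2 + 2 * c * gi * go + go ^ 2) > 0) :
    η * L < 2 * (min (gi ^ 2) (go ^ 2) + c * gi * go) /
        (gi ^ 2 + 2 * c * gi * go + go ^ 2) ∧
    c > -(min gi go / max gi go) := by
  set D := gi ^ 2 + 2 * c * gi * go + go ^ 2 with hD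
  have h1 : η * L / 2 * D < gi ^ 2 + c * gi * go := by nlinarith [mul_pos hη hη]
  have h2 : η * L / 2 * D < go ^ 2 + c * gi * go := by nlinarith [mul_pos hη hη]
  have hpos : 0 < η * L / 2 * D := by positivity
  constructor
  · rw [lt_div_iff₀ hdenom]
    rcases le_total (gi ^ 2) (go ^ 2) with h | h
    · rw [min_eq_left h]; nlinarith
    · rw [min_eq_right h]; nlinarith
  · rcases le_total gi go with h | h
    · rw [min_eq_left h, max_eq_right h, gt_iff_lt, neg_div' , div_lt_iff₀ hgo]
      nlinarith
    · rw [min_eq_right h, max_eq_left h, gt_iff_lt, neg_div', div_lt_iff₀ hgi]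
      nlinarith
end

section
/- Under the same smoothness and update assumptions, if r_t = ‖a‖/‖b‖ satisfies r_t ≥ √(cos²θ + 3) + cos θ where cos θ = ⟨a,b⟩/(‖a‖‖b‖), and ηL ≤ 2(min(‖a‖²,‖b‖²) + ⟨a,b⟩)/‖a+b‖² with ‖a+b‖ > 0 and min(‖a‖²,‖b‖²) + ⟨a,b⟩ > 0, then the summed loss decrease gap Δ_t = (f^i(ω_t) − f^i(ω_{t+1})) − (f^o(ω_t) − f^o(ω_{t+1})) ≥ 0. -/
/-!
Two-sided `L`-smoothness bounds the gap by `η (‖a‖² - ‖b‖²) - L η² ‖a + b‖²`, and the step-size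
condition (with `min (‖a‖², ‖b‖²) ≤ ‖b‖²`) turns this into `η (‖a‖² - 2⟪a, b⟫ - 3‖b‖²)`.
Writing `r = ‖a‖ / ‖b‖` and `c = cos θ`, the last factor is `‖b‖² (r² - 2 c r - 3)`, which is
nonnegative exactly when `r` lies beyond the larger root `c + √(c² + 3)`.
-/

open RealInnerProductSpace

theorem three_add_two_mul_le_sq_of_sqrt_add_le {c r : ℝ} (h : √(c ^ 2 + 3) + c ≤ r) :
    3 + 2 * c * r ≤ r ^ 2 := by
  have hsq : √(c ^ 2 + 3) ^ 2 = c ^ 2 + 3 := Real.sq_sqrt (by positivity)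
  nlinarith [Real.sqrt_nonneg (c ^ 2 + 3)]

section InnerProductSpace

variable {E : Type*} [NormedAddCommGroup E] [InnerProductSpace ℝ E]

theorem three_mul_sq_add_two_inner_le_sq {a b : E}
    (h : √((⟪a, b⟫ / (‖a‖ * ‖b‖)) ^ 2 + 3) + ⟪a, b⟫ / (‖a‖ * ‖b‖) ≤ ‖a‖ / ‖b‖) :
    3 * ‖b‖ ^ 2 + 2 * ⟪a, b⟫ ≤ ‖a‖ ^ 2 := by
  by_cases hab : a = 0 ∨ b = 0
  · -- division by zero makes both quotients `0`, so `h` reads `√3 ≤ 0`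
    rcases hab with rfl | rfl <;> norm_num [Real.sqrt_le_left] at h
  obtain ⟨ha, hb⟩ := not_or.mp hab
  have ha' : ‖a‖ ≠ 0 := norm_ne_zero_iff.mpr ha
  have hb' : ‖b‖ ≠ 0 := norm_ne_zero_iff.mpr hb
  have key := mul_le_mul_of_nonneg_right (three_add_two_mul_le_sq_of_sqrt_add_le h)
    (sq_nonneg ‖b‖)
  field_simp at key
  linarith

theorem inner_sub_le_sub_sub_sub_of_abs_le {f g : E → ℝ} {L : ℝ} {x y a b : E}
    (hf : |f y - f x - ⟪a, y - x⟫| ≤ L / 2 * ‖y - x‖ ^ 2)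
    (hg : |g y - g x - ⟪b, y - x⟫| ≤ L / 2 * ‖y - x‖ ^ 2) :
    ⟪b - a, y - x⟫ - L * ‖y - x‖ ^ 2 ≤ (f x - f y) - (g x - g y) := by
  rw [inner_sub_left]
  linarith [(abs_le.mp hf).2, (abs_le.mp hg).1]

theorem inner_sub_neg_smul_add (a b : E) (η : ℝ) :
    ⟪b - a, -(η • (a + b))⟫ = η * (‖a‖ ^ 2 - ‖b‖ ^ 2) := by
  rw [inner_neg_right, inner_smul_right, inner_sub_left, inner_add_right, inner_add_right,
    real_inner_self_eq_norm_sq, real_inner_self_eq_norm_sq, real_inner_comm a b]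
  ring

end InnerProductSpace

theorem summed_loss_gap_nonneg_general {d : ℕ}
    (fi fo : EuclideanSpace ℝ (Fin d) → ℝ) (L η : ℝ) (hη : 0 < η)
    (hfi : ∀ ω ω', |fi ω' - fi ω - inner ℝ (gradient fi ω) (ω' - ω)| ≤ L / 2 * ‖ω' - ω‖ ^ 2)
    (hfo : ∀ ω ω', |fo ω' - fo ω - inner ℝ (gradient fo ω) (ω' - ω)| ≤ L / 2 * ‖ω' - ω‖ ^ 2)
    (ωt : EuclideanSpace ℝ (Fin d)) (a b : EuclideanSpace ℝ (Fin d))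
    (ha : a = gradient fi ωt) (hb : b = gradient fo ωt)
    (ωt1 : EuclideanSpace ℝ (Fin d)) (hstep : ωt1 = ωt - η • (a + b))
    (hr : ‖a‖ / ‖b‖ ≥
      Real.sqrt ((inner ℝ a b / (‖a‖ * ‖b‖)) ^ 2 + 3) + inner ℝ a b / (‖a‖ * ‖b‖))
    (hsum : ‖a + b‖ > 0)
    (hηL : η * L ≤ 2 * (min (‖a‖ ^ 2) (‖b‖ ^ 2) + inner ℝ a b) / ‖a + b‖ ^ 2) :
    (fi ωt - fi ωt1) - (fo ωt - fo ωt1) ≥ 0 := by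
  have hkey := three_mul_sq_add_two_inner_le_sq hr
  have hδ : ωt1 - ωt = -(η • (a + b)) := by rw [hstep]; abel
  have hgap := inner_sub_le_sub_sub_sub_of_abs_le (hfi ωt ωt1) (hfo ωt ωt1)
  rw [← ha, ← hb, hδ, inner_sub_neg_smul_add, norm_neg, norm_smul, Real.norm_of_nonneg hη.le,
    mul_pow] at hgap
  have hstepL : η * L * ‖a + b‖ ^ 2 ≤ 2 * (‖b‖ ^ 2 + ⟪a, b⟫) := by
    rw [le_div_iff₀ (by positivity)] at hηL
    linarith [min_le_right (‖a‖ ^ 2) (‖b‖ ^ 2)]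
  nlinarith [mul_le_mul_of_nonneg_left hstepL hη.le]

/-- Under the same smoothness and update assumptions, if `r_t = ‖a‖/‖b‖` satisfies
`r_t ≥ √(cos²θ + 3) + cosθ` with `cosθ = ⟪a,b⟫/(‖a‖‖b‖)`, and
`ηL ≤ 2(min(‖a‖²,‖b‖²) + ⟪a,b⟫)/‖a+b‖²` with `‖a+b‖ > 0` and
`min(‖a‖²,‖b‖²) + ⟪a,b⟫ > 0`, then the summed loss decrease gap is nonnegative. -/
theorem summed_loss_gap_nonneg {d : ℕ}
    (fi fo : EuclideanSpace ℝ (Fin d) → ℝ) (L η : ℝ) (hη : 0 < η)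
    (hfi : ∀ ω ω', |fi ω' - fi ω - inner ℝ (gradient fi ω) (ω' - ω)| ≤ L / 2 * ‖ω' - ω‖ ^ 2)
    (hfo : ∀ ω ω', |fo ω' - fo ω - inner ℝ (gradient fo ω) (ω' - ω)| ≤ L / 2 * ‖ω' - ω‖ ^ 2)
    (ωt : EuclideanSpace ℝ (Fin d)) (a b : EuclideanSpace ℝ (Fin d))
    (ha : a = gradient fi ωt) (hb : b = gradient fo ωt)
    (ha0 : a ≠ 0) (hb0 : b ≠ 0)
    (ωt1 : EuclideanSpace ℝ (Fin d)) (hstep : ωt1 = ωt - η • (a + b))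
    (hr : ‖a‖ / ‖b‖ ≥
      Real.sqrt ((inner ℝ a b / (‖a‖ * ‖b‖)) ^ 2 + 3) + inner ℝ a b / (‖a‖ * ‖b‖))
    (hsum : ‖a + b‖ > 0)
    (hmin : min (‖a‖ ^ 2) (‖b‖ ^ 2) + inner ℝ a b > 0)
    (hηL : η * L ≤ 2 * (min (‖a‖ ^ 2) (‖b‖ ^ 2) + inner ℝ a b) / ‖a + b‖ ^ 2) :
    (fi ωt - fi ωt1) - (fo ωt - fo ωt1) ≥ 0 :=
  summed_loss_gap_nonneg_general fi fo L η hη hfi hfo ωt a b ha hb ωt1 hstep hr hsum hηL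
end
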